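/- arXiv:1810.08105 — 2 statements merged into one kernel-verified Lean document; each statement's English description precedes it below -/
import Mathlib

section
/- Let z ∈ (-1,1) and ξ ∈ S^{d-1}. A point η ∈ S^{d-1} satisfies ⟨h_z(η), ξ⟩ = z·ξ_d if and only if ⟨η, g_z(ξ)⟩ = 0. In other words, h_z^{-1}(C_z^ξ) = C_0^{g_z(ξ)}, where C_z^ξ = {η ∈ S^{d-1} : ⟨η,ξ⟩ = z·ξ_d} and C_0^{g_z(ξ)} = {η ∈ S^{d-1} : ⟨η, g_z(ξ)⟩ = 0}. -/
open MeasureTheory Real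

noncomputable section

/-- Euclidean space `ℝ^(d+1)`; the unit sphere in it is `S^d` (the paper's `S^{d-1}` with
ambient dimension `d+1`). -/
abbrev E (d : ℕ) : Type := EuclideanSpace ℝ (Fin (d + 1))

/-- The map `h_z` of the paper. -/
def hMap (d : ℕ) (z : ℝ) (η : E d) : E d := WithLp.toLp 2 fun i =>
  if i = Fin.last d then (z + η (Fin.last d)) / (1 + z * η (Fin.last d))
  else Real.sqrt (1 - z ^ 2) * η i / (1 + z * η (Fin.last d))

/-- The map `g_z` of the paper. -/
def gMap (d : ℕ) (z : ℝ) (ξ : E d) : E d := WithLp.toLp 2 fun i =>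
  if i = Fin.last d then
    Real.sqrt (1 - z ^ 2) * ξ (Fin.last d) / Real.sqrt (1 - z ^ 2 * ξ (Fin.last d) ^ 2)
  else ξ i / Real.sqrt (1 - z ^ 2 * ξ (Fin.last d) ^ 2)

/-- The claimed inverse of `g_z`. -/
def gInv (d : ℕ) (z : ℝ) (ω : E d) : E d := WithLp.toLp 2 fun i =>
  if i = Fin.last d then
    ω (Fin.last d) / Real.sqrt (1 - z ^ 2 + z ^ 2 * ω (Fin.last d) ^ 2)
  else Real.sqrt (1 - z ^ 2) * ω i / Real.sqrt (1 - z ^ 2 + z ^ 2 * ω (Fin.last d) ^ 2)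

/-- The point reflection `r_z` of the sphere about the point `z·ε^d`. -/
def rMap (d : ℕ) (z : ℝ) (ω : E d) : E d := WithLp.toLp 2 fun i =>
  if i = Fin.last d then
    (2 * z - z ^ 2 * ω (Fin.last d) - ω (Fin.last d)) / (1 + z ^ 2 - 2 * z * ω (Fin.last d))
  else (z ^ 2 - 1) * ω i / (1 + z ^ 2 - 2 * z * ω (Fin.last d))

/-- The north pole `ε^d = (0,…,0,1)`. -/
def northPole (d : ℕ) : E d := WithLp.toLp 2 fun i => if i = Fin.last d then (1 : ℝ) else 0

/-! On the sphere `1 + z η_d > 0`, so clearing denominators turns `⟨h_z η, ξ⟩ = z ξ_d` into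
`√(1-z²) (s + √(1-z²) η_d ξ_d) = 0`, where `s` is the inner product of the first `d` coordinates
(use `z ξ_d (1 + z η_d) - (z + η_d) ξ_d = -(1-z²) η_d ξ_d`). The bracket is, up to the positive
factor `√(1 - z² ξ_d²)`, exactly `⟨η, g_z ξ⟩`. -/

lemma abs_apply_le_one_of_norm_eq_one {ι : Type*} [Fintype ι] {x : EuclideanSpace ℝ ι}
    (hx : ‖x‖ = 1) (i : ι) : |x i| ≤ 1 :=
  hx ▸ PiLp.norm_apply_le x i

lemma sum_hMap_mul (d : ℕ) (z : ℝ) (η ξ : E d) :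
    ∑ i, hMap d z η i * ξ i =
      (√(1 - z ^ 2) * ∑ i : Fin d, η i.castSucc * ξ i.castSucc
        + (z + η (Fin.last d)) * ξ (Fin.last d)) / (1 + z * η (Fin.last d)) := by
  simp only [Fin.sum_univ_castSucc, hMap, PiLp.toLp_apply, if_pos, Fin.castSucc_ne_last,
    if_false, Finset.mul_sum, add_div, Finset.sum_div]
  congr 1
  · refine Finset.sum_congr rfl fun i _ => ?_
    ring
  · ring

lemma sum_mul_gMap (d : ℕ) (z : ℝ) (η ξ : E d) :
    ∑ i, η i * gMap d z ξ i =
      (∑ i : Fin d, η i.castSucc * ξ i.castSucc + √(1 - z ^ 2) * η (Fin.last d) * ξ (Fin.last d))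
        / √(1 - z ^ 2 * ξ (Fin.last d) ^ 2) := by
  simp only [Fin.sum_univ_castSucc, gMap, PiLp.toLp_apply, if_pos, Fin.castSucc_ne_last,
    if_false, add_div, Finset.sum_div]
  congr 1
  · refine Finset.sum_congr rfl fun i _ => ?_
    ring
  · ring

lemma sphere_inner_eq_iff {z s a b : ℝ} (hz : |z| < 1) (ha : |a| ≤ 1) (hb : |b| ≤ 1) :
    (√(1 - z ^ 2) * s + (z + a) * b) / (1 + z * a) = z * b ↔
      (s + √(1 - z ^ 2) * a * b) / √(1 - z ^ 2 * b ^ 2) = 0 := by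
  have hza : |z * a| < 1 := by
    rw [abs_mul]; nlinarith [abs_nonneg z, abs_nonneg a]
  have hzb : |z * b| < 1 := by
    rw [abs_mul]; nlinarith [abs_nonneg z, abs_nonneg b]
  have hD : 0 < 1 + z * a := by linarith [neg_abs_le (z * a)]
  have hq : 0 < √(1 - z ^ 2 * b ^ 2) := by
    apply Real.sqrt_pos.mpr
    nlinarith [sq_abs (z * b), abs_nonneg (z * b)]
  have hc : 0 < √(1 - z ^ 2) := by
    apply Real.sqrt_pos.mpr
    nlinarith [sq_abs z, abs_nonneg z]
  have hc2 : √(1 - z ^ 2) ^ 2 = 1 - z ^ 2 := Real.sq_sqrt (by nlinarith [sq_abs z, abs_nonneg z])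
  rw [div_eq_iff hD.ne', div_eq_zero_iff, or_iff_left hq.ne']
  constructor
  · intro h
    have : √(1 - z ^ 2) * (s + √(1 - z ^ 2) * a * b) = 0 := by
      linear_combination h + a * b * hc2
    exact (mul_eq_zero.mp this).resolve_left hc.ne'
  · intro h
    linear_combination √(1 - z ^ 2) * h - a * b * hc2

theorem hMap_preimage_subsphere_general (d : ℕ) (z : ℝ) (hz : -1 < z) (hz' : z < 1)
    (ξ : E d) (hξ : ‖ξ‖ = 1) :
    (∀ η : E d, ‖η‖ = 1 →
      ((∑ i, hMap d z η i * ξ i) = z * ξ (Fin.last d) ↔ (∑ i, η i * gMap d z ξ i) = 0)) ∧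
    {η : E d | ‖η‖ = 1 ∧ (∑ i, hMap d z η i * ξ i) = z * ξ (Fin.last d)} =
      {η : E d | ‖η‖ = 1 ∧ (∑ i, η i * gMap d z ξ i) = 0} := by
  have hz_abs : |z| < 1 := abs_lt.mpr ⟨hz, hz'⟩
  have key : ∀ η : E d, ‖η‖ = 1 →
      ((∑ i, hMap d z η i * ξ i) = z * ξ (Fin.last d) ↔ (∑ i, η i * gMap d z ξ i) = 0) :=
    fun η hη => by
      rw [sum_hMap_mul, sum_mul_gMap]
      exact sphere_inner_eq_iff hz_abs (abs_apply_le_one_of_norm_eq_one hη _)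
        (abs_apply_le_one_of_norm_eq_one hξ _)
  refine ⟨key, Set.ext fun η => and_congr_right (key η)⟩

/-- `⟨h_z(η),ξ⟩ = zξ_d` iff `⟨η,g_z(ξ)⟩ = 0`; equivalently
`h_z⁻¹(C_z^ξ) = C_0^{g_z(ξ)}` as subsets of the sphere. -/
theorem hMap_preimage_subsphere (d : ℕ) (hd : 2 ≤ d) (z : ℝ) (hz : -1 < z) (hz' : z < 1)
    (ξ : E d) (hξ : ‖ξ‖ = 1) :
    (∀ η : E d, ‖η‖ = 1 →
      ((∑ i, hMap d z η i * ξ i) = z * ξ (Fin.last d) ↔ (∑ i, η i * gMap d z ξ i) = 0)) ∧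
    {η : E d | ‖η‖ = 1 ∧ (∑ i, hMap d z η i * ξ i) = z * ξ (Fin.last d)} =
      {η : E d | ‖η‖ = 1 ∧ (∑ i, η i * gMap d z ξ i) = 0} :=
  hMap_preimage_subsphere_general d z hz hz' ξ hξ

end
end

section
/- Let z ∈ (-1,1), ξ ∈ S^{d-1}, and η ∈ S^{d-1} with ⟨η, g_z(ξ)⟩ = 0. If e, e' are tangent vectors at η to the subsphere C_0^{g_z(ξ)} (i.e., ⟨e,η⟩ = ⟨e,g_z(ξ)⟩ = 0 and similarly for e'), then ⟨J e, J e'⟩ = ((1-z²)/(1+zη_d)²)·⟨e, e'⟩, where J is the Jacobian matrix of the extension of h_z at η. In particular, the differential of h_z is a conformal scaling by factor √(1-z²)/(1+zη_d) on this tangent space. -/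
open MeasureTheory Real

noncomputable section

/-- The Jacobian matrix of (the extension of) `h_z` at a point `η` of the sphere. -/
def Jh (d : ℕ) (z : ℝ) (η : E d) : Matrix (Fin (d + 1)) (Fin (d + 1)) ℝ := fun l m =>
  if l = Fin.last d then
    (if m = Fin.last d then (1 - z ^ 2) / (1 + z * η (Fin.last d)) ^ 2 else 0)
  else
    (if m = Fin.last d then -η l * (z * Real.sqrt (1 - z ^ 2)) / (1 + z * η (Fin.last d)) ^ 2
     else if l = m then Real.sqrt (1 - z ^ 2) / (1 + z * η (Fin.last d)) else 0)

/-! Write `a = 1 + zη_d` and `s = √(1-z²)`. The Jacobian acts as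
`J e = (s/a) (e + (e_d/a) u)` with `u = (s-1) ε^d - z η`, a multiple of a rank-one perturbation
of the identity. For `e ⊥ η` one has `⟨u, e⟩ = (s-1) e_d`, and `‖u‖² = 2(1-s)a` on the unit sphere,
which is exactly what makes the perturbation an isometry of `η^⊥`. -/

open scoped RealInnerProductSpace
open Matrix

theorem inner_add_smul_add_smul_eq_of_inner_eq {F : Type*} [NormedAddCommGroup F]
    [InnerProductSpace ℝ F] {u v e e' : F} {b c : ℝ}
    (he : ⟪u, e⟫ = b * ⟪v, e⟫) (he' : ⟪u, e'⟫ = b * ⟪v, e'⟫) (hu : c * ‖u‖ ^ 2 + 2 * b = 0) :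
    ⟪e + (c * ⟪v, e⟫) • u, e' + (c * ⟪v, e'⟫) • u⟫ = ⟪e, e'⟫ := by
  simp only [inner_add_left, inner_add_right, inner_smul_left, inner_smul_right,
    real_inner_self_eq_norm_sq, real_inner_comm u e, he, he', RCLike.conj_to_real]
  linear_combination c * ⟪v, e⟫ * ⟪v, e'⟫ * hu

theorem norm_smul_sub_smul_sq {F : Type*} [NormedAddCommGroup F] [InnerProductSpace ℝ F]
    {v η : F} (hv : ‖v‖ = 1) (hη : ‖η‖ = 1) {s z : ℝ} (hs : s ^ 2 = 1 - z ^ 2) :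
    ‖(s - 1) • v - z • η‖ ^ 2 = 2 * (1 - s) * (1 + z * ⟪v, η⟫) := by
  rw [norm_sub_sq_real, norm_smul, norm_smul, inner_smul_left, inner_smul_right, hv, hη,
    mul_pow, mul_pow, Real.norm_eq_abs, Real.norm_eq_abs, sq_abs, sq_abs, RCLike.conj_to_real]
  linear_combination hs

theorem EuclideanSpace.inner_eq_sum_mul {ι : Type*} [Fintype ι] (x y : EuclideanSpace ℝ ι) :
    ⟪x, y⟫ = ∑ i, x i * y i := by
  simp [PiLp.inner_apply, mul_comm]

theorem inner_toLp_mulVec_toLp_mulVec {n : Type*} [Fintype n] (M : Matrix n n ℝ) (x y : n → ℝ) :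
    ⟪WithLp.toLp 2 (M *ᵥ x), WithLp.toLp 2 (M *ᵥ y)⟫ =
      ∑ l, (∑ m, M l m * x m) * (∑ m, M l m * y m) := by
  simp [PiLp.inner_apply, mulVec, dotProduct, mul_comm]

theorem northPole_eq_single (d : ℕ) : northPole d = EuclideanSpace.single (Fin.last d) 1 := by
  ext i
  simp [northPole]

theorem inner_northPole (d : ℕ) (x : E d) : ⟪northPole d, x⟫ = x (Fin.last d) := by
  simp [northPole_eq_single, EuclideanSpace.inner_single_left]

theorem norm_northPole (d : ℕ) : ‖northPole d‖ = 1 := by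
  simp [northPole_eq_single]

theorem one_add_mul_pos_of_norm_eq_one {d : ℕ} {z : ℝ} (hz : -1 < z) (hz' : z < 1) {η : E d}
    (hη : ‖η‖ = 1) : 0 < 1 + z * η (Fin.last d) := by
  have h := PiLp.norm_apply_le η (Fin.last d)
  rw [hη, Real.norm_eq_abs, abs_le] at h
  nlinarith [mul_nonneg (by linarith : 0 ≤ 1 + z) (by linarith : 0 ≤ 1 + η (Fin.last d)),
    mul_nonneg (by linarith : 0 ≤ 1 - z) (by linarith : 0 ≤ 1 - η (Fin.last d))]

theorem Jh_eq_smul_one_add_vecMulVec {d : ℕ} {z : ℝ} (hz : z ^ 2 ≤ 1) {η : E d}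
    (ha : 1 + z * η (Fin.last d) ≠ 0) :
    Jh d z η = (√(1 - z ^ 2) / (1 + z * η (Fin.last d))) • (1 + vecMulVec
      ((1 + z * η (Fin.last d))⁻¹ • ⇑((√(1 - z ^ 2) - 1) • northPole d - z • η))
      ⇑(northPole d)) := by
  have hs : √(1 - z ^ 2) ^ 2 = 1 - z ^ 2 := Real.sq_sqrt (by linarith)
  ext l m
  by_cases hm : m = Fin.last d
  · subst hm
    by_cases hl : l = Fin.last d
    · subst hl
      simp only [Jh, ↓reduceIte, vecMulVec, northPole, WithLp.ofLp_sub, WithLp.ofLp_smul,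
        Pi.smul_apply, Pi.sub_apply, smul_eq_mul, mul_ite, mul_one, mul_zero, Matrix.smul_apply,
        Matrix.add_apply, one_apply_eq, of_apply]
      field_simp
      linear_combination (-1) * hs
    · simp only [Jh, hl, ↓reduceIte, neg_mul, vecMulVec, northPole, WithLp.ofLp_sub,
        WithLp.ofLp_smul, Pi.smul_apply, Pi.sub_apply, smul_eq_mul, mul_ite, mul_one, mul_zero,
        Matrix.smul_apply, Matrix.add_apply, ne_eq, not_false_eq_true, one_apply_ne, of_apply,
        zero_sub, mul_neg, zero_add]
      field_simp
  · simp only [Jh, hm, ↓reduceIte, vecMulVec, northPole, WithLp.ofLp_sub, WithLp.ofLp_smul,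
      Pi.smul_apply, Pi.sub_apply, smul_eq_mul, mul_ite, mul_one, mul_zero, Matrix.smul_apply,
      Matrix.add_apply, one_apply, of_apply, add_zero, ite_eq_right_iff, right_eq_ite_iff]
    rintro rfl rfl
    exact (hm rfl).elim

theorem toLp_Jh_mulVec {d : ℕ} {z : ℝ} (hz : z ^ 2 ≤ 1) {η : E d}
    (ha : 1 + z * η (Fin.last d) ≠ 0) (e : E d) :
    WithLp.toLp 2 (Jh d z η *ᵥ e) =
      (√(1 - z ^ 2) / (1 + z * η (Fin.last d))) • (e + ((1 + z * η (Fin.last d))⁻¹ *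
        ⟪northPole d, e⟫) • ((√(1 - z ^ 2) - 1) • northPole d - z • η)) := by
  rw [Jh_eq_smul_one_add_vecMulVec hz ha, smul_mulVec, add_mulVec, one_mulVec, vecMulVec_mulVec,
    op_smul_eq_smul, smul_smul, EuclideanSpace.inner_eq_sum_mul]
  ext i
  simp [dotProduct, mul_comm, mul_add]

theorem jacobian_conformal_general (d : ℕ) (z : ℝ) (hz : -1 < z) (hz' : z < 1)
    (η : E d) (hη : ‖η‖ = 1)
    (e e' : E d)
    (he₁ : (∑ i, e i * η i) = 0)
    (he'₁ : (∑ i, e' i * η i) = 0) :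
    (∑ l, (∑ m, Jh d z η l m * e m) * (∑ m, Jh d z η l m * e' m)) =
      (1 - z ^ 2) / (1 + z * η (Fin.last d)) ^ 2 * ∑ i, e i * e' i := by
  have hz2 : z ^ 2 ≤ 1 := by nlinarith
  have hs : √(1 - z ^ 2) ^ 2 = 1 - z ^ 2 := Real.sq_sqrt (by linarith)
  have ha : 1 + z * η (Fin.last d) ≠ 0 := (one_add_mul_pos_of_norm_eq_one hz hz' hη).ne'
  set u := (√(1 - z ^ 2) - 1) • northPole d - z • η
  have hu : (1 + z * η (Fin.last d))⁻¹ * ‖u‖ ^ 2 + 2 * (√(1 - z ^ 2) - 1) = 0 := by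
    rw [norm_smul_sub_smul_sq (norm_northPole d) hη hs, inner_northPole]
    field_simp
    ring
  have hu_tangent : ∀ x : E d, ∑ i, x i * η i = 0 →
      ⟪u, x⟫ = (√(1 - z ^ 2) - 1) * ⟪northPole d, x⟫ := by
    intro x hx
    rw [← EuclideanSpace.inner_eq_sum_mul, real_inner_comm] at hx
    simp [u, inner_sub_left, inner_smul_left, hx]
  rw [← inner_toLp_mulVec_toLp_mulVec, toLp_Jh_mulVec hz2 ha, toLp_Jh_mulVec hz2 ha,
    inner_smul_left, inner_smul_right,
    inner_add_smul_add_smul_eq_of_inner_eq (hu_tangent e he₁) (hu_tangent e' he'₁) hu,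
    EuclideanSpace.inner_eq_sum_mul, RCLike.conj_to_real, ← mul_assoc, div_mul_div_comm, ← sq,
    ← sq, hs]

/-- On the tangent space of `C_0^{g_z(ξ)}` at `η`, the differential of `h_z` is a conformal
scaling: `⟨Je, Je'⟩ = ((1-z²)/(1+zη_d)²)⟨e, e'⟩`. -/
theorem jacobian_conformal (d : ℕ) (hd : 2 ≤ d) (z : ℝ) (hz : -1 < z) (hz' : z < 1)
    (ξ : E d) (hξ : ‖ξ‖ = 1) (η : E d) (hη : ‖η‖ = 1)
    (hηξ : (∑ i, η i * gMap d z ξ i) = 0)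
    (e e' : E d)
    (he₁ : (∑ i, e i * η i) = 0) (he₂ : (∑ i, e i * gMap d z ξ i) = 0)
    (he'₁ : (∑ i, e' i * η i) = 0) (he'₂ : (∑ i, e' i * gMap d z ξ i) = 0) :
    (∑ l, (∑ m, Jh d z η l m * e m) * (∑ m, Jh d z η l m * e' m)) =
      (1 - z ^ 2) / (1 + z * η (Fin.last d)) ^ 2 * ∑ i, e i * e' i :=
  jacobian_conformal_general d z hz hz' η hη e e' he₁ he'₁
end
end
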